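/- arXiv:1902.09169 — 3 statements merged into one kernel-verified Lean document; each statement's English description precedes it below -/
import Mathlib

section
/- Let X_1, X_2, … be i.i.d. with E w(X_1) < ∞ for measurable w : X → (0,∞), let n_N/N → α ∈ (0,1) almost surely, and let c_N be the unique constant with ∑_{i=1}^N min{c_N w(X_i)/∑_j w(X_j), 1} = n_N. Then c_N/N → θ almost surely, where θ is the unique positive constant with E min{θ w(X_1)/E w(X_2), 1} = α. -/
/-!
By the strong law of large numbers, almost surely the empirical mean `w̄_N` of the `w(X_i)`
tends to `E w(X_1)`, and for every rational `q` the empirical mean of `min (q w(X_i) / E w) 1`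
tends to `φ(q) := E min (q w(X_1) / E w) 1`. Since `t ↦ min (t a) 1` is `a`-Lipschitz, replacing
`E w` by `w̄_N` moves these means by at most `|scale difference| · w̄_N → 0`, so the empirical map
`F_N(t) = (1/N) ∑ min (t w(X_i) / w̄_N) 1` converges to `φ` at every rational. Each `F_N` is
monotone with `F_N(c_N/N) = n_N/N → α`, while `φ < α` to the left of `θ` and `φ > α` to its
right: `φ(θ) = α < 1` forces `θ w(X_1) / E w < 1` with positive probability, and there `φ` is
strictly increasing. Hence `c_N/N` is eventually trapped in any neighbourhood of `θ`.
-/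

open MeasureTheory ProbabilityTheory Filter

open Topology Finset

theorem tendsto_of_monotone_of_tendsto_apply {f : ℕ → ℝ → ℝ} (hf : ∀ N, Monotone (f N))
    {y : ℕ → ℝ} {α θ : ℝ} (hy : Tendsto (fun N => f N (y N)) atTop (𝓝 α))
    (hbelow : ∀ t < θ, ∃ a, t < a ∧ ∃ L < α, Tendsto (fun N => f N a) atTop (𝓝 L))
    (habove : ∀ t > θ, ∃ b, b < t ∧ ∃ L > α, Tendsto (fun N => f N b) atTop (𝓝 L)) :
    Tendsto y atTop (𝓝 θ) := by
  refine tendsto_order.2 ⟨fun t ht => ?_, fun t ht => ?_⟩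
  · obtain ⟨a, hta, L, hL, ha⟩ := hbelow t ht
    filter_upwards [ha.eventually_lt hy hL] with N hN
    exact hta.trans ((hf N).reflect_lt hN)
  · obtain ⟨b, hbt, L, hL, hb⟩ := habove t ht
    filter_upwards [hy.eventually_lt hb hL] with N hN
    exact ((hf N).reflect_lt hN).trans hbt

section TruncMean

variable {x : ℕ → ℝ}

noncomputable def truncMean (x : ℕ → ℝ) (N : ℕ) (s : ℝ) : ℝ :=
  (∑ i ∈ range N, min (s * x i) 1) / N

theorem truncMean_mono (hx : ∀ i, 0 ≤ x i) (N : ℕ) : Monotone (truncMean x N) := by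
  intro s s' h
  unfold truncMean
  gcongr with i
  exact hx i

theorem abs_truncMean_sub_le (hx : ∀ i, 0 ≤ x i) (N : ℕ) (s s' : ℝ) :
    |truncMean x N s - truncMean x N s'| ≤ |s - s'| * ((∑ i ∈ range N, x i) / N) := by
  have hterm (i : ℕ) : |min (s * x i) 1 - min (s' * x i) 1| ≤ |s - s'| * x i :=
    calc _ ≤ max |s * x i - s' * x i| |1 - 1| := abs_min_sub_min_le_max _ _ _ _
      _ = |s - s'| * x i := by
        rw [sub_self, abs_zero, max_eq_left (abs_nonneg _), ← sub_mul, abs_mul,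
          abs_of_nonneg (hx i)]
  rw [truncMean, truncMean, ← sub_div, ← sum_sub_distrib, abs_div, Nat.abs_cast, ← mul_div_assoc,
    mul_sum]
  gcongr
  exact (abs_sum_le_sum_abs _ _).trans (sum_le_sum fun i _ => hterm i)

theorem tendsto_truncMean_of_tendsto_scale (hx : ∀ i, 0 ≤ x i) {m : ℝ}
    (hm : Tendsto (fun N : ℕ => (∑ i ∈ range N, x i) / N) atTop (𝓝 m))
    {s : ℕ → ℝ} {s₀ L : ℝ} (hs : Tendsto s atTop (𝓝 s₀))
    (hL : Tendsto (fun N => truncMean x N s₀) atTop (𝓝 L)) :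
    Tendsto (fun N => truncMean x N (s N)) atTop (𝓝 L) := by
  have hbound : Tendsto (fun N => |s N - s₀| * ((∑ i ∈ range N, x i) / N)) atTop (𝓝 0) := by
    simpa using ((hs.sub_const s₀).abs).mul hm
  have hdiff := squeeze_zero_norm (f := fun N => truncMean x N (s N) - truncMean x N s₀)
    (fun N => abs_truncMean_sub_le hx N (s N) s₀) hbound
  simpa using hL.add hdiff

/-- `N · inclusionMean x N (c / N)` is the expected size of a Poisson sample drawn with inclusion
probabilities `min (c x i / ∑ j, x j) 1`. -/
noncomputable def inclusionMean (x : ℕ → ℝ) (N : ℕ) (t : ℝ) : ℝ :=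
  truncMean x N (t / ((∑ i ∈ range N, x i) / N))

theorem inclusionMean_mono (hx : ∀ i, 0 ≤ x i) (N : ℕ) : Monotone (inclusionMean x N) :=
  (truncMean_mono hx N).comp fun _ _ h =>
    div_le_div_of_nonneg_right h (div_nonneg (sum_nonneg fun i _ => hx i) N.cast_nonneg)

theorem inclusionMean_div_natCast {N : ℕ} (hN : N ≠ 0) (c : ℝ) :
    inclusionMean x N (c / N) = (∑ i ∈ range N, min (c * x i / ∑ j ∈ range N, x j) 1) / N := by
  have hN' : (N : ℝ) ≠ 0 := Nat.cast_ne_zero.2 hN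
  simp only [inclusionMean, truncMean, div_div_div_cancel_right₀ hN']
  simp only [div_mul_eq_mul_div]

theorem tendsto_inclusionMean (hx : ∀ i, 0 ≤ x i) {m : ℝ} (hm₀ : m ≠ 0)
    (hm : Tendsto (fun N : ℕ => (∑ i ∈ range N, x i) / N) atTop (𝓝 m)) {t L : ℝ}
    (hL : Tendsto (fun N => truncMean x N (t / m)) atTop (𝓝 L)) :
    Tendsto (fun N => inclusionMean x N t) atTop (𝓝 L) :=
  tendsto_truncMean_of_tendsto_scale hx hm (tendsto_const_nhds.div hm hm₀) hL

end TruncMean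

section Integral

variable {Ω : Type*} [MeasurableSpace Ω] {P : Measure Ω}

theorem integral_lt_integral_of_ae_le_of_measure_lt_ne_zero {f g : Ω → ℝ}
    (hfi : Integrable f P) (hgi : Integrable g P) (hle : f ≤ᵐ[P] g)
    (hlt : P {ω | f ω < g ω} ≠ 0) : ∫ ω, f ω ∂P < ∫ ω, g ω ∂P := by
  rw [← sub_pos, ← integral_sub hgi hfi, integral_pos_iff_support_of_nonneg_ae
    (hle.mono fun ω => sub_nonneg.2) (hgi.sub hfi)]
  exact pos_iff_ne_zero.2 (mt (measure_mono_null fun ω hω => (sub_pos.2 hω).ne') hlt)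

theorem integrable_min_mul_one [IsFiniteMeasure P] {g : Ω → ℝ} (hg : Integrable g P) (s : ℝ) :
    Integrable (fun ω => min (s * g ω) 1) P :=
  (hg.const_mul s).inf (integrable_const 1)

theorem integral_min_mul_lt_of_lt [IsFiniteMeasure P] {g : Ω → ℝ} (hg : Integrable g P)
    (hpos : ∀ ω, 0 < g ω) {s t : ℝ} (hst : s < t) (hs : P {ω | s * g ω < 1} ≠ 0) :
    ∫ ω, min (s * g ω) 1 ∂P < ∫ ω, min (t * g ω) 1 ∂P := by
  have hmul (ω : Ω) : s * g ω < t * g ω := mul_lt_mul_of_pos_right hst (hpos ω)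
  refine integral_lt_integral_of_ae_le_of_measure_lt_ne_zero (integrable_min_mul_one hg s)
    (integrable_min_mul_one hg t) (ae_of_all _ fun ω => min_le_min_right 1 (hmul ω).le)
    (mt (measure_mono_null fun ω hω => ?_) hs)
  rw [Set.mem_ofPred_eq, min_eq_left hω.le]
  exact lt_min (hmul ω) hω

theorem measure_setOf_lt_one_ne_zero_of_integral_min_lt_one [IsProbabilityMeasure P] {f : Ω → ℝ}
    (h : ∫ ω, min (f ω) 1 ∂P < 1) : P {ω | f ω < 1} ≠ 0 := by
  intro h0
  have hone : ∀ᵐ ω ∂P, min (f ω) 1 = 1 := by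
    simpa [ae_iff, min_eq_right_iff] using h0
  simp [integral_congr_ae hone] at h

theorem ae_tendsto_avg_comp [IsProbabilityMeasure P] {𝒳 : Type*} [MeasurableSpace 𝒳]
    {X : ℕ → Ω → 𝒳} (hX : ∀ i, Measurable (X i)) (hindep : iIndepFun X P)
    (hident : ∀ i, P.map (X i) = P.map (X 0)) {f : 𝒳 → ℝ} (hf : Measurable f)
    (hint : Integrable (fun ω => f (X 0 ω)) P) :
    ∀ᵐ ω ∂P, Tendsto (fun N : ℕ => (∑ i ∈ range N, f (X i ω)) / N) atTop
      (𝓝 (∫ ω, f (X 0 ω) ∂P)) :=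
  strong_law_ae_real (fun i => f ∘ X i) hint
    (fun _ _ hij => (hindep.comp (fun _ => f) fun _ => hf).indepFun hij)
    (fun i => (IdentDistrib.mk (hX i).aemeasurable (hX 0).aemeasurable (hident i)).comp hf)

end Integral

theorem stmt12_general {𝒳 Ω : Type*} [MeasurableSpace 𝒳] [MeasurableSpace Ω]
    (P : Measure Ω) [IsProbabilityMeasure P]
    (X : ℕ → Ω → 𝒳) (hXmeas : ∀ i, Measurable (X i))
    (hindep : iIndepFun X P)
    (hident : ∀ i, Measure.map (X i) P = Measure.map (X 0) P)
    (w : 𝒳 → ℝ) (hwm : Measurable w) (hw : ∀ x, 0 < w x)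
    (hint : Integrable (fun ω => w (X 0 ω)) P)
    (α : ℝ) (hα : α ∈ Set.Ioo (0:ℝ) 1)
    (n : ℕ → Ω → ℝ)
    (hn : ∀ᵐ ω ∂P, Tendsto (fun N : ℕ => n N ω / N) atTop (nhds α))
    (c : ℕ → Ω → ℝ)
    (hc : ∀ N : ℕ, 0 < N → ∀ ω, 0 < c N ω ∧
      ∑ i ∈ Finset.range N,
        min (c N ω * w (X i ω) / ∑ j ∈ Finset.range N, w (X j ω)) 1 = n N ω)
    (θ : ℝ)
    (hθeq : (∫ ω, min (θ * w (X 0 ω) / ∫ ω', w (X 0 ω') ∂P) 1 ∂P) = α) :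
    ∀ᵐ ω ∂P, Tendsto (fun N : ℕ => c N ω / N) atTop (nhds θ) := by
  set μ := ∫ ω, w (X 0 ω) ∂P
  have hμ : 0 < μ := by
    simpa using integral_lt_integral_of_ae_le_of_measure_lt_ne_zero (integrable_zero _ _ P) hint
      (ae_of_all _ fun ω => (hw _).le) (by simp [hw])
  set φ : ℝ → ℝ := fun s => ∫ ω, min (s * w (X 0 ω)) 1 ∂P
  have hφθ : φ (θ / μ) = α := by simpa only [φ, div_mul_eq_mul_div] using hθeq
  have hθ_lt_one : P {ω | θ / μ * w (X 0 ω) < 1} ≠ 0 :=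
    measure_setOf_lt_one_ne_zero_of_integral_min_lt_one (hφθ.trans_lt hα.2)
  have hW := ae_tendsto_avg_comp hXmeas hindep hident hwm hint
  have hZ : ∀ᵐ ω ∂P, ∀ q : ℚ,
      Tendsto (fun N => truncMean (fun i => w (X i ω)) N (q / μ)) atTop (𝓝 (φ (q / μ))) :=
    ae_all_iff.2 fun q => ae_tendsto_avg_comp (f := fun y => min (q / μ * w y) 1) hXmeas hindep
      hident ((hwm.const_mul _).min measurable_const) (integrable_min_mul_one hint _)
  filter_upwards [hn, hW, hZ] with ω hnω hWω hZω
  have hx (i : ℕ) : 0 ≤ w (X i ω) := (hw _).le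
  have hlim (q : ℚ) : Tendsto (fun N => inclusionMean (fun i => w (X i ω)) N q) atTop
      (𝓝 (φ (q / μ))) :=
    tendsto_inclusionMean hx hμ.ne' hWω (hZω q)
  refine tendsto_of_monotone_of_tendsto_apply (α := α) (inclusionMean_mono hx) ?_
    (fun t ht => ?_) (fun t ht => ?_)
  · refine hnω.congr' ?_
    filter_upwards [eventually_gt_atTop 0] with N hN
    rw [inclusionMean_div_natCast hN.ne', (hc N hN ω).2]
  · obtain ⟨q, htq, hqθ⟩ := exists_rat_btwn ht
    have hqθ' : q / μ < θ / μ := div_lt_div_of_pos_right hqθ hμ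
    have hq_lt_one : P {ω | q / μ * w (X 0 ω) < 1} ≠ 0 := fun h => hθ_lt_one <|
      measure_mono_null (fun ω hω => (mul_lt_mul_of_pos_right hqθ' (hw _)).trans hω) h
    exact ⟨q, htq, φ (q / μ),
      (integral_min_mul_lt_of_lt hint (fun _ => hw _) hqθ' hq_lt_one).trans_eq hφθ, hlim q⟩
  · obtain ⟨q, hθq, hqt⟩ := exists_rat_btwn ht
    exact ⟨q, hqt, φ (q / μ), hφθ.symm.trans_lt <| integral_min_mul_lt_of_lt hint (fun _ => hw _)
      (div_lt_div_of_pos_right hθq hμ) hθ_lt_one, hlim q⟩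

theorem stmt12 {𝒳 Ω : Type*} [MeasurableSpace 𝒳] [MeasurableSpace Ω]
    (P : Measure Ω) [IsProbabilityMeasure P]
    (X : ℕ → Ω → 𝒳) (hXmeas : ∀ i, Measurable (X i))
    (hindep : iIndepFun X P)
    (hident : ∀ i, Measure.map (X i) P = Measure.map (X 0) P)
    (w : 𝒳 → ℝ) (hwm : Measurable w) (hw : ∀ x, 0 < w x)
    (hint : Integrable (fun ω => w (X 0 ω)) P)
    (α : ℝ) (hα : α ∈ Set.Ioo (0:ℝ) 1)
    (n : ℕ → Ω → ℝ)
    (hn : ∀ᵐ ω ∂P, Tendsto (fun N : ℕ => n N ω / N) atTop (nhds α))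
    (c : ℕ → Ω → ℝ)
    (hc : ∀ N : ℕ, 0 < N → ∀ ω, 0 < c N ω ∧
      ∑ i ∈ Finset.range N,
        min (c N ω * w (X i ω) / ∑ j ∈ Finset.range N, w (X j ω)) 1 = n N ω)
    (θ : ℝ) (hθpos : 0 < θ)
    (hθeq : (∫ ω, min (θ * w (X 0 ω) / ∫ ω', w (X 0 ω') ∂P) 1 ∂P) = α) :
    ∀ᵐ ω ∂P, Tendsto (fun N : ℕ => c N ω / N) atTop (nhds θ) :=
  stmt12_general P X hXmeas hindep hident w hwm hw hint α hα n hn c hc θ hθeq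
end

section
/- Under size-proportional Poisson sampling with π_{i,N} = min{c_N w(X_i)/∑_j w(X_j), 1}, c_N/N → θ a.s., and assuming E[f(Y_1)g(Y_1)/w_θ(X_1)²] < ∞ where w_θ(x) := min{w(x), E w(X_1)/θ}, the design covariance Σ'_N(f,g) := N^{-1} ∑_{i=1}^N ((1−π_{i,N})/π_{i,N}) f(Y_i) g(Y_i) converges almost surely to Σ'(f,g) := E[ w_θ(X_1)·( E w(X_2)/θ − w_θ(X_1) )·f(Y_1)g(Y_1)/w_θ(X_1)² ]. -/
/-!
Writing `S_N = ∑_{j<N} w(X_j)` and `t_N = S_N / c_N`, the design weight is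
`(1 - π_{i,N}) / π_{i,N} = (t_N - w(X_i))⁺ / w(X_i)`, and the limit integrand is
`(t₀ - w(X_1))⁺ / w(X_1) · f g` with `t₀ = E w(X_1) / θ`. By the strong law `t_N → t₀` a.s.,
and since `t ↦ (t - w)⁺` is 1-Lipschitz, replacing `t_N` by `t₀` changes `Σ'_N(f, g)` by at
most `|t_N - t₀| · N⁻¹ ∑ |f g|(Y_i) / w(X_i)`, which tends to zero by the strong law applied to
`|f g| / w ≤ t₀ |f g| / w_θ²`. The strong law for `(t₀ - w)⁺ / w · f g` concludes.
-/

open MeasureTheory ProbabilityTheory Filter Finset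

lemma one_sub_min_div_min_eq {c w S : ℝ} (hc : 0 < c) (hw : 0 < w) (hS : 0 < S) :
    (1 - min (c * w / S) 1) / min (c * w / S) 1 = max (S / c - w) 0 / w := by
  rcases le_total (c * w / S) 1 with h | h
  · have hwS : w ≤ S / c := by
      rw [le_div_iff₀ hc, mul_comm]
      exact (div_le_one hS).1 h
    rw [min_eq_left h, max_eq_left (sub_nonneg.2 hwS)]
    field_simp
  · have hSw : S / c ≤ w := by
      rw [div_le_iff₀ hc, mul_comm]
      exact (one_le_div hS).1 h
    rw [min_eq_right h, max_eq_right (sub_nonpos.2 hSw)]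
    simp

lemma min_mul_sub_min_mul_div_min_sq {a : ℝ} (ha : 0 < a) (t F : ℝ) :
    min a t * (t - min a t) * F / min a t ^ 2 = max (t - a) 0 / a * F := by
  rcases le_total a t with h | h
  · rw [min_eq_left h, max_eq_left (sub_nonneg.2 h)]
    field_simp
  · rw [min_eq_right h, max_eq_right (sub_nonpos.2 h)]
    simp

lemma abs_max_sub_div_mul_sub_le {a : ℝ} (ha : 0 < a) (F s t : ℝ) :
    |max (s - a) 0 / a * F - max (t - a) 0 / a * F| ≤ |s - t| * (|F| / a) := by
  have hlip : |max (s - a) 0 - max (t - a) 0| ≤ |s - t| := by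
    simpa using abs_max_sub_max_le_abs (s - a) (t - a) 0
  rw [← sub_mul, ← sub_div, abs_mul, abs_div, abs_of_pos ha, div_mul_eq_mul_div,
    mul_div_assoc']
  gcongr

lemma abs_max_sub_div_mul_le {a t : ℝ} (ha : 0 < a) (ht : 0 ≤ t) (F : ℝ) :
    |max (t - a) 0 / a * F| ≤ t * (|F| / a) := by
  have h := abs_max_sub_div_mul_sub_le ha F t 0
  rwa [zero_sub, max_eq_right (neg_nonpos.2 ha.le), zero_div, zero_mul, sub_zero, sub_zero,
    abs_of_nonneg ht] at h

lemma abs_div_le_mul_abs_div_min_sq {a t : ℝ} (ha : 0 < a) (ht : 0 < t) (F : ℝ) :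
    |F| / a ≤ t * |F / min a t ^ 2| := by
  have hm : 0 < min a t := lt_min ha ht
  have hsq : min a t ^ 2 ≤ a * t := by
    rw [sq]; exact mul_le_mul (min_le_left _ _) (min_le_right _ _) hm.le ha.le
  rw [abs_div, abs_of_pos (pow_pos hm 2), mul_div_assoc', le_div_iff₀ (pow_pos hm 2),
    div_mul_eq_mul_div, div_le_iff₀ ha]
  calc |F| * min a t ^ 2 ≤ |F| * (a * t) := by gcongr
    _ = t * |F| * a := by ring

lemma tendsto_average_of_lipschitz_param {u : ℝ → ℕ → ℝ} {G t : ℕ → ℝ} {t₀ L M : ℝ}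
    (hu : ∀ s i, |u s i - u t₀ i| ≤ |s - t₀| * G i) (ht : Tendsto t atTop (nhds t₀))
    (hL : Tendsto (fun N : ℕ => (∑ i ∈ range N, u t₀ i) / N) atTop (nhds L))
    (hG : Tendsto (fun N : ℕ => (∑ i ∈ range N, G i) / N) atTop (nhds M)) :
    Tendsto (fun N : ℕ => (∑ i ∈ range N, u (t N) i) / N) atTop (nhds L) := by
  have hbound : ∀ N : ℕ, ‖(∑ i ∈ range N, u (t N) i) / N - (∑ i ∈ range N, u t₀ i) / N‖
      ≤ |t N - t₀| * ((∑ i ∈ range N, G i) / N) := fun N => by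
    rw [Real.norm_eq_abs, ← sub_div, ← sum_sub_distrib, abs_div, Nat.abs_cast,
      mul_div_assoc', mul_sum]
    gcongr
    exact (abs_sum_le_sum_abs _ _).trans (sum_le_sum fun i _ => (hu (t N) i).trans_eq (by ring))
  have hsmall : Tendsto (fun N : ℕ => |t N - t₀| * ((∑ i ∈ range N, G i) / N)) atTop
      (nhds 0) := by
    simpa using ((ht.sub_const t₀).abs).mul hG
  simpa using (squeeze_zero_norm hbound hsmall).add hL

lemma tendsto_design_weighted_average {W F c : ℕ → ℝ} {μ θ L M : ℝ} (hW : ∀ i, 0 < W i)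
    (hθ : 0 < θ) (hc : Tendsto (fun N : ℕ => c N / N) atTop (nhds θ))
    (hS : Tendsto (fun N : ℕ => (∑ j ∈ range N, W j) / N) atTop (nhds μ))
    (hL : Tendsto (fun N : ℕ => (∑ i ∈ range N, max (μ / θ - W i) 0 / W i * F i) / N) atTop
      (nhds L))
    (hG : Tendsto (fun N : ℕ => (∑ i ∈ range N, |F i| / W i) / N) atTop (nhds M)) :
    Tendsto (fun N : ℕ => (N : ℝ)⁻¹ * ∑ i ∈ range N,
        ((1 - min (c N * W i / ∑ j ∈ range N, W j) 1) / min (c N * W i / ∑ j ∈ range N, W j) 1)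
          * F i) atTop (nhds L) := by
  have ht : Tendsto (fun N : ℕ => (∑ j ∈ range N, W j) / c N) atTop (nhds (μ / θ)) := by
    refine (hS.div hc hθ.ne').congr' ?_
    filter_upwards [eventually_ge_atTop 1] with N hN
    exact div_div_div_cancel_right₀ (by positivity) _ _
  have hc_pos : ∀ᶠ N : ℕ in atTop, 0 < c N := by
    filter_upwards [hc.eventually (lt_mem_nhds hθ), eventually_ge_atTop 1] with N hN hN₁
    exact (div_pos_iff_of_pos_right (by positivity)).1 hN
  refine (tendsto_average_of_lipschitz_param (u := fun s i => max (s - W i) 0 / W i * F i)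
    (fun s i => abs_max_sub_div_mul_sub_le (hW i) _ _ _) ht hL hG).congr' ?_
  filter_upwards [hc_pos, eventually_ge_atTop 1] with N hcN hN
  have hS_pos : 0 < ∑ j ∈ range N, W j :=
    sum_pos (fun j _ => hW j) (nonempty_range_iff.2 (by omega))
  rw [div_eq_inv_mul]
  exact congrArg _ (sum_congr rfl fun i _ => by rw [one_sub_min_div_min_eq hcN (hW i) hS_pos])

lemma strong_law_ae_comp {Ω β : Type*} [MeasurableSpace Ω] [MeasurableSpace β] {P : Measure Ω}
    {Z : ℕ → Ω → β} (hindep : Pairwise fun i j => IndepFun (Z i) (Z j) P)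
    (hident : ∀ i, IdentDistrib (Z i) (Z 0) P P) {h : β → ℝ} (hm : Measurable h)
    (hint : Integrable (fun ω => h (Z 0 ω)) P) :
    ∀ᵐ ω ∂P, Tendsto (fun n : ℕ => (∑ i ∈ range n, h (Z i ω)) / n) atTop
      (nhds (∫ ω, h (Z 0 ω) ∂P)) :=
  strong_law_ae_real (fun i ω => h (Z i ω)) hint
    (fun _ _ hij => (hindep hij).comp hm hm) (fun i => (hident i).comp hm)

theorem stmt13 {Ω 𝒴 𝒳 : Type*} [MeasurableSpace Ω] [MeasurableSpace 𝒴] [MeasurableSpace 𝒳]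
    (P : Measure Ω) [IsProbabilityMeasure P]
    (Z : ℕ → Ω → 𝒴 × 𝒳) (hZmeas : ∀ i, Measurable (Z i))
    (hindep : iIndepFun Z P)
    (hident : ∀ i, Measure.map (Z i) P = Measure.map (Z 0) P)
    (w : 𝒳 → ℝ) (hwm : Measurable w) (hw : ∀ x, 0 < w x)
    (hwint : Integrable (fun ω => w (Z 0 ω).2) P)
    (θ : ℝ) (hθ : 0 < θ)
    (c : ℕ → Ω → ℝ)
    (hc : ∀ᵐ ω ∂P, Tendsto (fun N : ℕ => c N ω / N) atTop (nhds θ))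
    (f g : 𝒴 → ℝ) (hf : Measurable f) (hg : Measurable g)
    (hfg : Integrable (fun ω => f (Z 0 ω).1 * g (Z 0 ω).1 /
        (min (w (Z 0 ω).2) ((∫ ω', w (Z 0 ω').2 ∂P) / θ)) ^ 2) P) :
    ∀ᵐ ω ∂P, Tendsto (fun N : ℕ =>
        (N : ℝ)⁻¹ * ∑ i ∈ Finset.range N,
          ((1 - min (c N ω * w (Z i ω).2 / ∑ j ∈ Finset.range N, w (Z j ω).2) 1)
              / min (c N ω * w (Z i ω).2 / ∑ j ∈ Finset.range N, w (Z j ω).2) 1)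
            * (f (Z i ω).1 * g (Z i ω).1))
      atTop
      (nhds (∫ ω, min (w (Z 0 ω).2) ((∫ ω', w (Z 0 ω').2 ∂P) / θ)
            * ((∫ ω', w (Z 0 ω').2 ∂P) / θ
                - min (w (Z 0 ω).2) ((∫ ω', w (Z 0 ω').2 ∂P) / θ))
            * (f (Z 0 ω).1 * g (Z 0 ω).1)
            / (min (w (Z 0 ω).2) ((∫ ω', w (Z 0 ω').2 ∂P) / θ)) ^ 2 ∂P)) := by
  set μ := ∫ ω', w (Z 0 ω').2 ∂P
  have ht₀ : 0 < μ / θ := by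
    refine div_pos ((integral_pos_iff_support_of_nonneg (fun ω => (hw _).le) hwint).2 ?_) hθ
    simp [Function.support, (hw _).ne']
  have hpair : Pairwise fun i j => IndepFun (Z i) (Z j) P := fun _ _ hij => hindep.indepFun hij
  have hid : ∀ i, IdentDistrib (Z i) (Z 0) P P :=
    fun i => ⟨(hZmeas i).aemeasurable, (hZmeas 0).aemeasurable, hident i⟩
  have hGm : Measurable fun p : 𝒴 × 𝒳 => |f p.1 * g p.1| / w p.2 := by fun_prop
  have hLm : Measurable fun p : 𝒴 × 𝒳 => max (μ / θ - w p.2) 0 / w p.2 * (f p.1 * g p.1) := by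
    fun_prop
  have hG : Integrable (fun ω => |f (Z 0 ω).1 * g (Z 0 ω).1| / w (Z 0 ω).2) P := by
    refine (hfg.abs.const_mul (μ / θ)).mono' (hGm.comp (hZmeas 0)).aestronglyMeasurable
      (Eventually.of_forall fun ω => ?_)
    rw [Real.norm_of_nonneg (div_nonneg (abs_nonneg _) (hw _).le)]
    exact abs_div_le_mul_abs_div_min_sq (hw _) ht₀ _
  have hL : Integrable (fun ω => max (μ / θ - w (Z 0 ω).2) 0 / w (Z 0 ω).2
      * (f (Z 0 ω).1 * g (Z 0 ω).1)) P := by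
    refine (hG.const_mul (μ / θ)).mono' (hLm.comp (hZmeas 0)).aestronglyMeasurable
      (Eventually.of_forall fun ω => ?_)
    rw [Real.norm_eq_abs]
    exact abs_max_sub_div_mul_le (hw _) ht₀.le _
  rw [integral_congr_ae (Eventually.of_forall fun ω =>
    min_mul_sub_min_mul_div_min_sq (hw (Z 0 ω).2) (μ / θ) (f (Z 0 ω).1 * g (Z 0 ω).1))]
  filter_upwards [hc, strong_law_ae_comp hpair hid (hwm.comp measurable_snd) hwint,
    strong_law_ae_comp hpair hid hLm hL, strong_law_ae_comp hpair hid hGm hG]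
    with ω hcω hSω hLω hGω
  exact tendsto_design_weighted_average (fun i => hw _) hθ hcω hSω hLω hGω
end

section
/- Let F be a class of functions and suppose there exists a constant C ≠ 0 such that the constant function C belongs to F. If the Lindeberg-type condition N^{-1}∑_{i=1}^N ((1−π_{i,N})/π_{i,N}) ‖v(Y_i)‖² 1{‖v(Y_i)‖ > π_{i,N}√N ε} → 0 in probability holds for every ε > 0 and every finite vector v of functions from F, then it also holds with v(Y_i) replaced by v(Y_i) − P_N v, where P_N v := N^{-1}∑_j v(Y_j), provided each coordinate of P_N v converges in probability to a finite limit. -/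
/-!
Adjoin the constant `C` to `v` as an extra coordinate. On the event where every empirical mean
`P_N v_k` lies within `1` of its limit `m_k`, the means are bounded, so
`‖v(y) - P_N v‖² ≤ 2‖v(y)‖² + 2‖P_N v‖² ≤ K (C² + ‖v(y)‖²)` for a constant `K` depending only on
`m` and `C`. Since `C ≠ 0`, the right-hand side is `K` times the squared norm of the augmented
vector, so each centered Lindeberg summand at level `ε` is at most `K` times the augmented
summand at level `ε / √K`. The centered Lindeberg sum is therefore dominated by `K` times the
augmented one outside an event of vanishing probability.
-/

open MeasureTheory Filter Topology Finset

section ConvergenceInMeasure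

variable {α ι κ E F : Type*} [MeasurableSpace α] {μ : Measure α} {l : Filter ι}

theorem tendstoInMeasure_zero_of_norm_le_mul_off [SeminormedAddCommGroup E]
    [SeminormedAddCommGroup F] {f : ι → α → E} {g : ι → α → F} {B : ι → Set α} {c : ℝ}
    (hc : 0 < c) (hB : Tendsto (fun i => μ (B i)) l (𝓝 0))
    (hg : TendstoInMeasure μ g l (fun _ => 0))
    (hfg : ∀ i, ∀ x ∉ B i, ‖f i x‖ ≤ c * ‖g i x‖) :
    TendstoInMeasure μ f l (fun _ => 0) := by
  simp_rw [tendstoInMeasure_iff_norm, sub_zero] at hg ⊢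
  intro δ hδ
  have hsub : ∀ i, {x | δ ≤ ‖f i x‖} ⊆ B i ∪ {x | δ / c ≤ ‖g i x‖} := by
    intro i x hx
    by_cases hxB : x ∈ B i
    · exact Or.inl hxB
    · right
      simp only [Set.mem_ofPred_eq] at hx ⊢
      rw [div_le_iff₀' hc]
      exact hx.trans (hfg i x hxB)
  refine tendsto_of_tendsto_of_tendsto_of_le_of_le tendsto_const_nhds
    (by simpa using hB.add (hg (δ / c) (div_pos hδ hc))) (fun _ => zero_le) fun i => ?_
  exact (measure_mono (hsub i)).trans (measure_union_le _ _)

theorem tendsto_measure_iUnion_le_dist [Fintype κ] [PseudoMetricSpace E] {h : κ → ι → α → E}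
    {m : κ → E} (hh : ∀ k, TendstoInMeasure μ (h k) l (fun _ => m k)) {η : ℝ} (hη : 0 < η) :
    Tendsto (fun i => μ (⋃ k, {x | η ≤ dist (h k i x) (m k)})) l (𝓝 0) := by
  have hsum : Tendsto (fun i => ∑ k, μ {x | η ≤ dist (h k i x) (m k)}) l (𝓝 0) := by
    simpa using tendsto_finsetSum univ fun k _ => tendstoInMeasure_iff_dist.1 (hh k) η hη
  exact tendsto_of_tendsto_of_tendsto_of_le_of_le tendsto_const_nhds hsum (fun _ => zero_le)
    fun i => measure_iUnion_fintype_le μ _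

end ConvergenceInMeasure

section LindebergSum

/-- `q i` plays the role of `‖v(Yᵢ)‖²`. -/
noncomputable def lindebergSum (π : ℕ → ℝ) (N : ℕ) (ε : ℝ) (q : ℕ → ℝ) : ℝ :=
  (N : ℝ)⁻¹ * ∑ i ∈ range N,
    (1 - π i) / π i * q i * (if π i * Real.sqrt N * ε < Real.sqrt (q i) then 1 else 0)

theorem truncated_le_mul_truncated {a t ε K q q' : ℝ} (ha : 0 ≤ a) (hK : 0 < K) (hq : 0 ≤ q)
    (hq' : q' ≤ K * q) :
    a * q' * (if t * ε < Real.sqrt q' then 1 else 0)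
      ≤ K * (a * q * (if t * (ε / Real.sqrt K) < Real.sqrt q then 1 else 0)) := by
  by_cases htrunc : t * ε < Real.sqrt q'
  · have hsK : 0 < Real.sqrt K := Real.sqrt_pos.2 hK
    have htrunc' : t * (ε / Real.sqrt K) < Real.sqrt q := by
      rw [← mul_div_assoc, div_lt_iff₀ hsK]
      calc t * ε < Real.sqrt q' := htrunc
        _ ≤ Real.sqrt (q * K) := Real.sqrt_le_sqrt (by linarith)
        _ = Real.sqrt q * Real.sqrt K := Real.sqrt_mul hq K
    rw [if_pos htrunc, if_pos htrunc']
    nlinarith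
  · rw [if_neg htrunc, mul_zero]
    have : (0 : ℝ) ≤ if t * (ε / Real.sqrt K) < Real.sqrt q then 1 else 0 := by
      split_ifs <;> norm_num
    positivity

theorem lindebergSum_nonneg {π : ℕ → ℝ} (hπ : ∀ i, π i ∈ Set.Ioc (0 : ℝ) 1) (N : ℕ) (ε : ℝ)
    {q : ℕ → ℝ} (hq : ∀ i, 0 ≤ q i) : 0 ≤ lindebergSum π N ε q := by
  refine mul_nonneg (by positivity) (sum_nonneg fun i _ => ?_)
  have hw : 0 ≤ (1 - π i) / π i := div_nonneg (sub_nonneg.2 (hπ i).2) (hπ i).1.le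
  have := hq i
  split_ifs <;> positivity

theorem lindebergSum_le_mul {π : ℕ → ℝ} (hπ : ∀ i, π i ∈ Set.Ioc (0 : ℝ) 1) {N : ℕ}
    {ε K : ℝ} (hK : 0 < K) {q q' : ℕ → ℝ} (hq : ∀ i, 0 ≤ q i)
    (hq' : ∀ i ∈ range N, q' i ≤ K * q i) :
    lindebergSum π N ε q' ≤ K * lindebergSum π N (ε / Real.sqrt K) q := by
  unfold lindebergSum
  rw [mul_left_comm]
  refine mul_le_mul_of_nonneg_left ?_ (by positivity)
  rw [mul_sum]
  refine sum_le_sum fun i hi => ?_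
  exact truncated_le_mul_truncated (div_nonneg (sub_nonneg.2 (hπ i).2) (hπ i).1.le) hK (hq i)
    (hq' i hi)

end LindebergSum

theorem sum_sq_le_of_dist_lt_one {ι : Type*} (s : Finset ι) {p m : ι → ℝ}
    (h : ∀ k ∈ s, dist (p k) (m k) < 1) : ∑ k ∈ s, p k ^ 2 ≤ ∑ k ∈ s, (|m k| + 1) ^ 2 := by
  refine sum_le_sum fun k hk => ?_
  rw [← sq_abs]
  have := abs_sub_abs_le_abs_sub (p k) (m k)
  have := h k hk
  rw [Real.dist_eq] at this
  gcongr
  linarith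

theorem sum_sub_sq_le {ι : Type*} (s : Finset ι) (x p : ι → ℝ) {C K : ℝ} (hK : 1 ≤ K)
    (hp : ∑ k ∈ s, p k ^ 2 ≤ K * C ^ 2) :
    ∑ k ∈ s, (x k - p k) ^ 2 ≤ 2 * K * (C ^ 2 + ∑ k ∈ s, x k ^ 2) := by
  have hsub : ∑ k ∈ s, (x k - p k) ^ 2 ≤ 2 * (∑ k ∈ s, x k ^ 2 + ∑ k ∈ s, p k ^ 2) := by
    rw [← sum_add_distrib, mul_sum]
    gcongr with k
    simpa [sub_eq_add_neg] using add_sq_le (a := x k) (b := -p k)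
  have hx : 0 ≤ ∑ k ∈ s, x k ^ 2 := sum_nonneg fun k _ => sq_nonneg _
  nlinarith

theorem stmt19_general {Ω 𝒴 : Type*} [MeasurableSpace Ω]
    (P : Measure Ω)
    (Y : ℕ → Ω → 𝒴)
    (π : (N : ℕ) → ℕ → Ω → ℝ)
    (hπ : ∀ N i ω, π N i ω ∈ Set.Ioc (0:ℝ) 1)
    (F : Set (𝒴 → ℝ)) (C : ℝ) (hC : C ≠ 0) (hCF : (fun _ => C) ∈ F)
    (hLind : ∀ (r : ℕ) (v : Fin r → 𝒴 → ℝ), (∀ k, v k ∈ F) → ∀ ε : ℝ, 0 < ε →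
      TendstoInMeasure P (fun (N : ℕ) ω =>
          (N : ℝ)⁻¹ * ∑ i ∈ Finset.range N,
            ((1 - π N i ω) / π N i ω)
              * (∑ k, (v k (Y i ω)) ^ 2)
              * (if π N i ω * Real.sqrt N * ε
                    < Real.sqrt (∑ k, (v k (Y i ω)) ^ 2) then 1 else 0))
        atTop (fun _ => (0 : ℝ))) :
    ∀ (r : ℕ) (v : Fin r → 𝒴 → ℝ), (∀ k, v k ∈ F) →
      (∃ m : Fin r → ℝ, ∀ k, TendstoInMeasure P
          (fun (N : ℕ) ω => (N : ℝ)⁻¹ * ∑ j ∈ Finset.range N, v k (Y j ω))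
          atTop (fun _ => m k)) →
      ∀ ε : ℝ, 0 < ε →
      TendstoInMeasure P (fun (N : ℕ) ω =>
          (N : ℝ)⁻¹ * ∑ i ∈ Finset.range N,
            ((1 - π N i ω) / π N i ω)
              * (∑ k, (v k (Y i ω)
                  - (N : ℝ)⁻¹ * ∑ j ∈ Finset.range N, v k (Y j ω)) ^ 2)
              * (if π N i ω * Real.sqrt N * ε
                    < Real.sqrt (∑ k, (v k (Y i ω)
                        - (N : ℝ)⁻¹ * ∑ j ∈ Finset.range N, v k (Y j ω)) ^ 2)
                  then 1 else 0))
        atTop (fun _ => (0 : ℝ)) := by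
  rintro r v hv ⟨m, hm⟩ ε hε
  set K : ℝ := max 1 ((∑ k, (|m k| + 1) ^ 2) / C ^ 2)
  have hK : 1 ≤ K := le_max_left _ _
  have hmK : ∑ k, (|m k| + 1) ^ 2 ≤ K * C ^ 2 :=
    (div_le_iff₀ (by positivity)).1 (le_max_right _ _)
  let w : Fin (r + 1) → 𝒴 → ℝ := Fin.cons (fun _ => C) v
  have hwF : ∀ k, w k ∈ F := Fin.cases hCF hv
  have hw : ∀ y, ∑ k, w k y ^ 2 = C ^ 2 + ∑ k, v k y ^ 2 := fun y => by
    simp [w, Fin.sum_univ_succ]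
  refine tendstoInMeasure_zero_of_norm_le_mul_off (by positivity : (0 : ℝ) < 2 * K)
    (tendsto_measure_iUnion_le_dist hm one_pos)
    (hLind (r + 1) w hwF (ε / Real.sqrt (2 * K)) (by positivity)) fun N ω hω => ?_
  simp only [Set.mem_iUnion, Set.mem_ofPred_eq, not_exists, not_le] at hω
  have hmean := sum_sq_le_of_dist_lt_one univ fun k _ => hω k
  have hnonneg : ∀ i, 0 ≤ ∑ k, w k (Y i ω) ^ 2 := fun i => sum_nonneg fun _ _ => sq_nonneg _
  change ‖lindebergSum (fun i => π N i ω) N ε _‖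
    ≤ 2 * K * ‖lindebergSum (fun i => π N i ω) N (ε / Real.sqrt (2 * K)) _‖
  rw [Real.norm_of_nonneg (lindebergSum_nonneg (hπ N · ω) N _ fun i => sum_nonneg fun _ _ =>
      sq_nonneg _), Real.norm_of_nonneg (lindebergSum_nonneg (hπ N · ω) N _ hnonneg)]
  refine lindebergSum_le_mul (hπ N · ω) (by positivity) hnonneg fun i _ => ?_
  rw [hw]
  exact sum_sub_sq_le univ _ _ hK (hmean.trans hmK)

theorem stmt19 {Ω 𝒴 : Type*} [MeasurableSpace Ω] [MeasurableSpace 𝒴]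
    (P : Measure Ω) [IsProbabilityMeasure P]
    (Y : ℕ → Ω → 𝒴) (hY : ∀ i, Measurable (Y i))
    (π : (N : ℕ) → ℕ → Ω → ℝ)
    (hπ : ∀ N i ω, π N i ω ∈ Set.Ioc (0:ℝ) 1)
    (F : Set (𝒴 → ℝ)) (C : ℝ) (hC : C ≠ 0) (hCF : (fun _ => C) ∈ F)
    (hLind : ∀ (r : ℕ) (v : Fin r → 𝒴 → ℝ), (∀ k, v k ∈ F) → ∀ ε : ℝ, 0 < ε →
      TendstoInMeasure P (fun (N : ℕ) ω =>
          (N : ℝ)⁻¹ * ∑ i ∈ Finset.range N,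
            ((1 - π N i ω) / π N i ω)
              * (∑ k, (v k (Y i ω)) ^ 2)
              * (if π N i ω * Real.sqrt N * ε
                    < Real.sqrt (∑ k, (v k (Y i ω)) ^ 2) then 1 else 0))
        atTop (fun _ => (0 : ℝ))) :
    ∀ (r : ℕ) (v : Fin r → 𝒴 → ℝ), (∀ k, v k ∈ F) →
      (∃ m : Fin r → ℝ, ∀ k, TendstoInMeasure P
          (fun (N : ℕ) ω => (N : ℝ)⁻¹ * ∑ j ∈ Finset.range N, v k (Y j ω))
          atTop (fun _ => m k)) →
      ∀ ε : ℝ, 0 < ε →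
      TendstoInMeasure P (fun (N : ℕ) ω =>
          (N : ℝ)⁻¹ * ∑ i ∈ Finset.range N,
            ((1 - π N i ω) / π N i ω)
              * (∑ k, (v k (Y i ω)
                  - (N : ℝ)⁻¹ * ∑ j ∈ Finset.range N, v k (Y j ω)) ^ 2)
              * (if π N i ω * Real.sqrt N * ε
                    < Real.sqrt (∑ k, (v k (Y i ω)
                        - (N : ℝ)⁻¹ * ∑ j ∈ Finset.range N, v k (Y j ω)) ^ 2)
                  then 1 else 0))
        atTop (fun _ => (0 : ℝ)) :=
  stmt19_general P Y π hπ F C hC hCF hLind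
end
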